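/- (Picone inequality for the p-Laplacian, pointwise form) Let $1<p<\infty$, and let $u\ge 0$, $v>0$ be real numbers with gradients (vectors) $\xi,\eta\in\mathbb{R}^n$. Then $|\xi|^p\ \ge\ |\eta|^{p-2}\eta\cdot\Big(\frac{p\,u^{p-1}}{v^{p-1}}\xi-\frac{(p-1)u^p}{v^p}\eta\Big)$, i.e., the pointwise Picone inequality $|\nabla u|^p\ge \nabla\big(\frac{u^p}{v^{p-1}}\big)\cdot|\nabla v|^{p-2}\nabla v$ holds. -/

import Mathlib

/-!
Writing `t = u / v`, the right-hand side is `‖η‖ ^ (p - 2) (p t ^ (p - 1) ⟪η, ξ⟫ - (p - 1) t ^ p ‖η‖ ^ 2)`.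
Cauchy–Schwarz bounds it by `p b ^ (p - 1) a - (p - 1) b ^ p` with `a = ‖ξ‖`, `b = t ‖η‖`, and Young's
inequality `a b ^ (p - 1) ≤ a ^ p / p + b ^ p / p'` for the conjugate exponent `p' = p / (p - 1)`
bounds that by `a ^ p`.
-/

open Real RealInnerProductSpace

lemma Real.mul_rpow_sub_one_mul_le {p a b : ℝ} (hp : 1 < p) (ha : 0 ≤ a) (hb : 0 ≤ b) :
    p * b ^ (p - 1) * a ≤ a ^ p + (p - 1) * b ^ p := by
  have hp₁ : 0 < p - 1 := by linarith
  have hpq : p.HolderConjugate (p / (p - 1)) := .conjExponent hp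
  have young := young_inequality_of_nonneg ha (rpow_nonneg hb (p - 1)) hpq
  have hpow : (b ^ (p - 1)) ^ (p / (p - 1)) = b ^ p := by
    rw [← rpow_mul hb]
    congr 1
    field_simp
  rw [hpow] at young
  calc p * b ^ (p - 1) * a = p * (a * b ^ (p - 1)) := by ring
    _ ≤ p * (a ^ p / p + b ^ p / (p / (p - 1))) := by gcongr
    _ = a ^ p + (p - 1) * b ^ p := by field_simp

section InnerProductSpace

variable {E : Type*} [NormedAddCommGroup E] [InnerProductSpace ℝ E]

lemma rpow_norm_sub_two_mul_inner_le {p : ℝ} (hp : 1 < p) (ξ η : E) :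
    ‖η‖ ^ (p - 2) * ⟪η, ξ⟫ ≤ ‖η‖ ^ (p - 1) * ‖ξ‖ := by
  have hpow : ‖η‖ ^ (p - 1) = ‖η‖ ^ (p - 2) * ‖η‖ := by
    rw [← rpow_add_one' (norm_nonneg η) (by linarith)]
    ring_nf
  rw [hpow, mul_assoc]
  exact mul_le_mul_of_nonneg_left (real_inner_le_norm η ξ) (by positivity)

lemma inner_rpow_norm_smul_sub_le {p t : ℝ} (hp : 1 < p) (ht : 0 ≤ t) (ξ η : E) :
    ⟪‖η‖ ^ (p - 2) • η, (p * t ^ (p - 1)) • ξ - ((p - 1) * t ^ p) • η⟫ ≤ ‖ξ‖ ^ p := by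
  have hnorm : ‖η‖ ^ (p - 2) * ‖η‖ ^ 2 = ‖η‖ ^ p := by
    rw [← rpow_two, ← rpow_add' (norm_nonneg η) (by linarith)]
    ring_nf
  have hcs := rpow_norm_sub_two_mul_inner_le hp ξ η
  have young := mul_rpow_sub_one_mul_le hp (norm_nonneg ξ) (mul_nonneg ht (norm_nonneg η))
  rw [mul_rpow ht (norm_nonneg η), mul_rpow ht (norm_nonneg η)] at young
  rw [real_inner_smul_left, inner_sub_right, real_inner_smul_right, real_inner_smul_right,
    real_inner_self_eq_norm_sq]
  calc ‖η‖ ^ (p - 2) * (p * t ^ (p - 1) * ⟪η, ξ⟫ - (p - 1) * t ^ p * ‖η‖ ^ 2)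
      = p * t ^ (p - 1) * (‖η‖ ^ (p - 2) * ⟪η, ξ⟫)
        - (p - 1) * t ^ p * (‖η‖ ^ (p - 2) * ‖η‖ ^ 2) := by ring
    _ ≤ p * t ^ (p - 1) * (‖η‖ ^ (p - 1) * ‖ξ‖) - (p - 1) * t ^ p * ‖η‖ ^ p := by
      rw [hnorm]
      gcongr
    _ ≤ ‖ξ‖ ^ p := by linarith

end InnerProductSpace

theorem picone_pointwise (n : ℕ) (p : ℝ) (hp : 1 < p)
    (u v : ℝ) (hu : 0 ≤ u) (hv : 0 < v)
    (ξ η : EuclideanSpace ℝ (Fin n)) :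
    (inner ℝ ((‖η‖ ^ (p - 2)) • η)
        ((p * u ^ (p - 1) / v ^ (p - 1)) • ξ - ((p - 1) * u ^ p / v ^ p) • η) : ℝ)
      ≤ ‖ξ‖ ^ p := by
  rw [mul_div_assoc, mul_div_assoc, ← div_rpow hu hv.le, ← div_rpow hu hv.le]
  exact inner_rpow_norm_smul_sub_le hp (div_nonneg hu hv.le) ξ η
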